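/- Let u be a snakeshape of size n. Among the standard Young-Fibonacci tableaux of shape u, the column canonical tableau cT_u is the unique one of minimal rank and the row canonical tableau rT_u is the unique one of maximal rank, where the rank of a tableau t is ρ(t) = inv(min(t)). Moreover ρ(cT_u) equals the number of parts of u equal to 2, and ρ(rT_u) equals the sum over all cells c of u of the quantity λ(c), where λ(c) is the number of height-2 columns strictly to the left of the column containing c, plus 1 if c is the top cell of a height-2 column. -/

import Mathlib

/-- A snakeshape: a composition all of whose parts equal 1 or 2, recorded as the
list of column heights, read left to right. -/
def IsSnakeshape (u : List ℕ) : Prop := ∀ p ∈ u, p = 1 ∨ p = 2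

/-- The shape (list of column heights, left to right) of a tableau given as a
list of columns, each column listed top to bottom. -/
def shapeOf (t : List (List ℕ)) : List ℕ := t.map List.length

/-- `t` is a standard Young–Fibonacci tableau of size `n`: columns are listed left
to right, each column top to bottom; every column has height 1 or 2; in each
column the top entry exceeds the bottom entry; every topmost entry exceeds all
entries in columns strictly to its right; and the entries are exactly `1,…,n`. -/
def IsYFT (n : ℕ) (t : List (List ℕ)) : Prop :=
  (∀ c ∈ t, c.length = 1 ∨ c.length = 2) ∧
  (∀ c ∈ t, List.Chain' (fun a b => b < a) c) ∧
  (∀ i j : ℕ, i < j → j < t.length →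
    ∀ a ∈ (t.getD i []).head?, ∀ x ∈ t.getD j [], x < a) ∧
  (t.flatten).Perm (List.range' 1 n)

/-- Auxiliary, fuelled version of the Young–Fibonacci insertion: reading the word
from right to left, each letter read gets matched to the largest not-yet-matched
letter occurring strictly to its left which exceeds it (forming a height-2 column,
larger letter on top), and otherwise stays single (a height-1 column); columns are
listed in the order in which their status was settled. -/
def insertColsAux : ℕ → List ℕ → List (List ℕ)
  | 0, _ => []
  | _, [] => []
  | fuel+1, w =>
    let x := w.getLast!
    let w' := w.dropLast
    match (w'.filter (fun y => decide (x < y))).max? with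
    | none => [x] :: insertColsAux fuel w'
    | some m => [m, x] :: insertColsAux fuel (w'.erase m)

/-- The Young–Fibonacci insertion tableau of a word. -/
def insertCols (w : List ℕ) : List (List ℕ) := insertColsAux w.length w

/-- The word `σ(1)⋯σ(n)` of a permutation of `{1,…,n}` (letters `1,…,n`). -/
def permWord {n : ℕ} (σ : Equiv.Perm (Fin n)) : List ℕ :=
  List.ofFn (fun i => (σ i : ℕ) + 1)

/-- min(t): read the columns right to left, each column top to bottom. -/
def minWord (t : List (List ℕ)) : List ℕ := t.reverse.flatten

/-- max(t): the top row left to right, then the bottom row right to left. -/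
def maxWord (t : List (List ℕ)) : List ℕ :=
  (t.filterMap fun c => if c.length = 2 then c.head? else none) ++
    (t.filterMap List.getLast?).reverse

/-- Number of inversions of a word: pairs of positions `p < q` with `w p > w q`. -/
def invCount (w : List ℕ) : ℕ :=
  ((Finset.range w.length ×ˢ Finset.range w.length).filter
    (fun p => p.1 < p.2 ∧ w.getD p.2 0 < w.getD p.1 0)).card

/-- `w'` is obtained from `w` by swapping two adjacent letters `x < y` (in this
order in `w`), thus creating exactly one more inversion. -/
def AdjSwap (w w' : List ℕ) : Prop :=
  ∃ l r : List ℕ, ∃ x y : ℕ, x < y ∧ w = l ++ x :: y :: r ∧ w' = l ++ y :: x :: r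

/-- The (right) weak order on words. -/
def WordWeakLe (w w' : List ℕ) : Prop := Relation.ReflTransGen AdjSwap w w'

/-- `Shift t t'`: `t'` is obtained from `t` by shifting one entry. Columns are
listed top to bottom, so `[b, a]` is the column with top `b`, bottom `a`. -/
inductive Shift : List (List ℕ) → List (List ℕ) → Prop
  /-- the bottom entry `a` of a height-2 column bumps up the single entry `c` of
  the column on its left; the top entry `b` falls down. -/
  | bump2 (l r : List (List ℕ)) (c b a : ℕ) :
      Shift (l ++ [[c], [b, a]] ++ r) (l ++ [[c, a], [b]] ++ r)
  /-- the entry `a` of a height-1 column bumps up the single entry `c` of the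
  column on its left; its own column disappears. -/
  | bump1 (l r : List (List ℕ)) (c a : ℕ) :
      Shift (l ++ [[c], [a]] ++ r) (l ++ [[c, a]] ++ r)
  /-- `a < c` replaces `c` at the bottom of the height-2 column on its left, and
  `c < b` takes the former place of `a`. -/
  | exch (l r : List (List ℕ)) (d c b a : ℕ) (h1 : a < c) (h2 : c < b) :
      Shift (l ++ [[d, c], [b, a]] ++ r) (l ++ [[d, a], [b, c]] ++ r)
  /-- `a < c` replaces `c` at the bottom of the height-2 column on its left; since
  `b < c`, `c` becomes a new height-1 column in between and `b` falls down. -/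
  | split2 (l r : List (List ℕ)) (d c b a : ℕ) (h1 : a < c) (h2 : b < c) :
      Shift (l ++ [[d, c], [b, a]] ++ r) (l ++ [[d, a], [c], [b]] ++ r)
  /-- `a < c` replaces `c` at the bottom of the height-2 column on its left; `c`
  becomes a new height-1 column and the height-1 column of `a` disappears. -/
  | split1 (l r : List (List ℕ)) (d c a : ℕ) (h1 : a < c) :
      Shift (l ++ [[d, c], [a]] ++ r) (l ++ [[d, a], [c]] ++ r)

/-- The bottom row of a tableau, read left to right: the bottom entries of the
height-2 columns together with the entries of the height-1 columns. -/
def bottomRow (t : List (List ℕ)) : List ℕ := t.filterMap List.getLast?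

/-- Generating relations of the canonical poset `P_t`: `canoGen t x y` means `x`
is covered... i.e. `x <_P y` is a generating relation: consecutive bottom-row
entries read right to left (rightmost lowest), and each top entry of a height-2
column below the corresponding bottom entry. -/
def canoGen (t : List (List ℕ)) (x y : ℕ) : Prop :=
  (∃ i : ℕ, i + 1 < (bottomRow t).length ∧
    (bottomRow t).getD (i + 1) 0 = x ∧ (bottomRow t).getD i 0 = y) ∨
  (∃ c ∈ t, c.length = 2 ∧ c.head? = some x ∧ c.getLast? = some y)

/-- `w` is (the word of) a linear extension of the canonical poset `P_t`. -/
def IsLinExt (t : List (List ℕ)) (w : List ℕ) : Prop :=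
  ∀ x y : ℕ, Relation.ReflTransGen (canoGen t) x y → x ≠ y →
    w.idxOf x < w.idxOf y

/-- The set of inversions of a word: pairs `(j, i)` with `i < j` such that `j`
occurs before `i`. -/
def InvSet (w : List ℕ) : Set (ℕ × ℕ) :=
  {p | p.2 < p.1 ∧ p.1 ∈ w ∧ p.2 ∈ w ∧ w.idxOf p.1 < w.idxOf p.2}

/-- The set of non-inversions of a word: pairs `(i, j)` with `i < j` such that `i`
occurs before `j`. -/
def NonInvSet (w : List ℕ) : Set (ℕ × ℕ) :=
  {p | p.1 < p.2 ∧ p.1 ∈ w ∧ p.2 ∈ w ∧ w.idxOf p.1 < w.idxOf p.2}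

/-- The row canonical tableau of shape `u` (size `n`): topmost cells are labelled
`n, n-1, …` from left to right, bottom cells of height-2 columns are labelled
`1, 2, …` from left to right. -/
def rTcols (n : ℕ) (u : List ℕ) : List (List ℕ) :=
  (List.range u.length).map (fun i =>
    if u.getD i 0 = 2 then [n - i, (u.take i).count 2 + 1] else [n - i])

/-- The column canonical tableau of shape `u`: cells are labelled `1, 2, …` taking
columns right to left, in each column the bottom cell before the top cell. -/
def cTcols (u : List ℕ) : List (List ℕ) :=
  (List.range u.length).map (fun i =>
    let s := u.sum - (u.take (i + 1)).sum
    if u.getD i 0 = 2 then [s + 2, s + 1] else [s + 1])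

/-- `t` is a semistandard Young–Fibonacci tableau of shape `u`: entries are
positive integers, in each column the top entry strictly exceeds the bottom one,
and every topmost entry is `≥` all entries in columns strictly to its right. -/
def IsSSYFT (u : List ℕ) (t : List (List ℕ)) : Prop :=
  shapeOf t = u ∧
  (∀ c ∈ t, List.Chain' (fun a b => b < a) c) ∧
  (∀ i j : ℕ, i < j → j < t.length →
    ∀ a ∈ (t.getD i []).head?, ∀ x ∈ t.getD j [], x ≤ a) ∧
  (∀ x ∈ t.flatten, 1 ≤ x)

/-- `t` has content `v`: for each `i`, `t` has exactly `v_i` entries equal to `i`.-/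
def ContentIs (v : List ℕ) (t : List (List ℕ)) : Prop :=
  ∀ i : ℕ, t.flatten.count (i + 1) = v.getD i 0

/-- The Young–Fibonacci number `N_{u,v}`: the number of semistandard
Young–Fibonacci tableaux of shape `u` and content `v`. -/
noncomputable def YFNumber (u v : List ℕ) : ℕ :=
  Nat.card {t : List (List ℕ) // IsSSYFT u t ∧ ContentIs v t}

/-- The multiset (as a list indexed by positions) `v^{1-}`: delete a part equal
to 1, or decrease a larger part by 1. -/
def vMinus (v : List ℕ) : List (List ℕ) :=
  (List.range v.length).map (fun p =>
    if v.getD p 0 = 1 then v.eraseIdx p else v.set p (v.getD p 0 - 1))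

/-- The list of snakeshapes covering `u` in the Young–Fibonacci lattice:
(i) prepend a part 1; (ii) replace the leftmost part equal to 1 by a 2;
(iii) if `u` starts with `k ≥ 1` parts equal to 2, insert a part 1 just after the
`i`-th part, `1 ≤ i ≤ k`. -/
def coversList (u : List ℕ) : List (List ℕ) :=
  [1 :: u] ++
    (if (u.takeWhile (fun p => decide (p = 2))).length < u.length then
      [u.take (u.takeWhile (fun p => decide (p = 2))).length ++
        2 :: u.drop ((u.takeWhile (fun p => decide (p = 2))).length + 1)]
    else []) ++
    ((List.range (u.takeWhile (fun p => decide (p = 2))).length).map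
      (fun i => u.insertIdx (i + 1) 1))

/-- Okada's analogue of the Kostka numbers (fuelled implementation of the
defining recurrences; `v.length` is enough fuel). -/
def OkadaKAux : ℕ → List ℕ → List ℕ → ℕ
  | _, [], [] => 1
  | fuel+1, 1 :: u, 1 :: v => OkadaKAux fuel u v
  | fuel+1, 2 :: u, 2 :: v => OkadaKAux fuel u v
  | _+1, 1 :: _, 2 :: _ => 0
  | fuel+1, 2 :: u, 1 :: v => ((coversList u).map (fun w => OkadaKAux fuel w v)).sum
  | _, _, _ => 0

/-- Okada's analogue `K_{u,v}` of the Kostka numbers, determined by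
`K_{∅,∅} = 1`, `K_{1u,1v} = K_{u,v}`, `K_{2u,2v} = K_{u,v}`, `K_{1u,2v} = 0` and
`K_{2u,1v} = Σ_{w covers u} K_{w,v}`. -/
def OkadaK (u v : List ℕ) : ℕ := OkadaKAux v.length u v

/-- The cells of a snakeshape `u`: pairs `(i, r)` with `i` the (0-based) column
index and `r = 0` for the bottom cell, `r = 1` for the top cell. -/
def cellsFinset (u : List ℕ) : Finset (ℕ × ℕ) :=
  (Finset.range u.length ×ˢ Finset.range 2).filter (fun p => p.2 < u.getD p.1 0)

/-- Generating relations of the poset `P_u` on the cells of `u`: the bottom-row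
cells read right to left form a chain (rightmost lowest), and the top cell of
each height-2 column lies strictly below its bottom cell. -/
def cellGen (u : List ℕ) (c c' : ℕ × ℕ) : Prop :=
  (∃ i : ℕ, i + 1 < u.length ∧ c = (i + 1, 0) ∧ c' = (i, 0)) ∨
  (∃ i : ℕ, i < u.length ∧ u.getD i 0 = 2 ∧ c = (i, 1) ∧ c' = (i, 0))

/-- The order relation of the poset `P_u`. -/
def cellLe (u : List ℕ) (c c' : ℕ × ℕ) : Prop :=
  Relation.ReflTransGen (cellGen u) c c'

/-! Prepending a column `c` to a tableau `t` appends `c` to `min(t)`, so the rank grows by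
`inv(c)` (one for a column of height two) plus the number of entries of `t` exceeding an entry
of `c`. The top of `c` exceeds every entry of `t`, hence only the bottom `a` of a height-two
column can contribute, at most once per cell of `t`. Summing over the columns gives
`#{parts 2} ≤ ρ(t) ≤ Σ λ(c)`. Equality on the left means that every column carries the largest
entries not used further left, which rebuilds `cT_u` column by column; equality on the right
means that every bottom entry is smaller than everything to its right, which rebuilds `rT_u`. -/

lemma sum_range_ite_getD_eq_countP (p : ℕ → Bool) (w : List ℕ) :
    ∑ q ∈ Finset.range w.length, (if p (w.getD q 0) then 1 else 0) = w.countP p := by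
  induction w with
  | nil => simp
  | cons x w ih =>
    rw [List.length_cons, Finset.sum_range_succ']
    simp only [List.getD_cons_succ, List.getD_cons_zero, ih, List.countP_cons]

lemma invCount_eq_sum (w : List ℕ) :
    invCount w = ∑ p ∈ Finset.range w.length, ∑ q ∈ Finset.range w.length,
      if p < q ∧ w.getD q 0 < w.getD p 0 then 1 else 0 := by
  rw [invCount, Finset.card_filter, Finset.sum_product]

lemma invCount_cons (x : ℕ) (w : List ℕ) :
    invCount (x :: w) = w.countP (· < x) + invCount w := by
  simp only [invCount_eq_sum, List.length_cons, Finset.sum_range_succ', List.getD_cons_succ,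
    List.getD_cons_zero, Nat.not_lt_zero, false_and, if_false, add_zero, add_lt_add_iff_right,
    Nat.zero_lt_succ, true_and]
  rw [← sum_range_ite_getD_eq_countP (· < x), add_comm]
  simp

lemma invCount_append_singleton (w : List ℕ) (a : ℕ) :
    invCount (w ++ [a]) = invCount w + w.countP (a < ·) := by
  induction w with
  | nil => simp [invCount_eq_sum]
  | cons x w ih =>
    simp only [List.cons_append, invCount_cons, ih, List.countP_append, List.countP_cons,
      List.countP_nil]
    omega

lemma invCount_map_of_strictMono {f : ℕ → ℕ} (hf : StrictMono f) (w : List ℕ) :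
    invCount (w.map f) = invCount w := by
  induction w with
  | nil => rfl
  | cons x w ih => simp [invCount_cons, ih, List.countP_map, Function.comp_def, hf.lt_iff_lt]

lemma cons_perm_range'_iff_of_forall_le {a s m : ℕ} {l : List ℕ} (h : ∀ x ∈ l, x ≤ a) :
    (a :: l).Perm (List.range' s (m + 1)) ↔ a = s + m ∧ l.Perm (List.range' s m) := by
  rw [List.range'_concat, one_mul]
  refine ⟨fun hp => ?_, fun ⟨ha, hl⟩ =>
    ha ▸ (hl.cons _).trans (List.perm_append_singleton _ _).symm⟩
  have hp' := hp.trans (List.perm_append_singleton _ _)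
  obtain rfl : a = s + m := by
    have ha : a ∈ List.range' s m ++ [s + m] := hp.subset List.mem_cons_self
    simp only [List.mem_append, List.mem_range'_1, List.mem_singleton] at ha
    obtain rfl | htop := List.mem_cons.1 (hp'.symm.subset List.mem_cons_self)
    · rfl
    · have := h _ htop
      omega
  exact ⟨rfl, hp'.cons_inv⟩

lemma cons_perm_range'_iff_of_forall_ge {a s m : ℕ} {l : List ℕ} (h : ∀ x ∈ l, a ≤ x) :
    (a :: l).Perm (List.range' s (m + 1)) ↔ a = s ∧ l.Perm (List.range' (s + 1) m) := by
  rw [List.range'_succ]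
  refine ⟨fun hp => ?_, fun ⟨ha, hl⟩ => ha ▸ hl.cons s⟩
  obtain rfl : a = s := by
    have ha : a ∈ s :: List.range' (s + 1) m := hp.subset List.mem_cons_self
    simp only [List.mem_cons, List.mem_range'_1] at ha
    obtain rfl | hbot := List.mem_cons.1 (hp.symm.subset List.mem_cons_self)
    · rfl
    · have := h _ hbot
      omega
  exact ⟨rfl, hp.cons_inv⟩

lemma List.Perm.map_add_range' {l : List ℕ} {s n : ℕ} (h : l.Perm (List.range' s n)) (k : ℕ) :
    (l.map (· + k)).Perm (List.range' (s + k) n) := by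
  have := h.map (k + ·)
  rwa [List.map_add_range', add_comm k, List.map_congr_left fun x _ => add_comm k x] at this

lemma lt_succ_of_mem_of_perm_range' {l : List ℕ} {s x : ℕ} (hl : l.Perm (List.range' 1 s))
    (hx : x ∈ l) : x < s + 1 := by
  have := List.mem_range'_1.1 (hl.subset hx)
  omega

def TopDominant (t : List (List ℕ)) : Prop :=
  ∀ i j : ℕ, i < j → j < t.length → ∀ a ∈ (t.getD i []).head?, ∀ x ∈ t.getD j [], x < a

lemma forall_getD_mem_iff {t : List (List ℕ)} {p : ℕ → Prop} :
    (∀ j < t.length, ∀ x ∈ t.getD j [], p x) ↔ ∀ x ∈ t.flatten, p x := by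
  constructor
  · intro h x hx
    obtain ⟨c, hc, hxc⟩ := List.mem_flatten.1 hx
    obtain ⟨j, hj, rfl⟩ := List.mem_iff_getElem.1 hc
    exact h j hj x (by rwa [List.getD_eq_getElem _ _ hj])
  · intro h j hj x hx
    rw [List.getD_eq_getElem _ _ hj] at hx
    exact h x (List.mem_flatten.2 ⟨_, List.getElem_mem hj, hx⟩)

lemma topDominant_cons {c : List ℕ} {t : List (List ℕ)} :
    TopDominant (c :: t) ↔ (∀ a ∈ c.head?, ∀ x ∈ t.flatten, x < a) ∧ TopDominant t := by
  constructor
  · intro h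
    refine ⟨fun a ha => forall_getD_mem_iff.1 fun j hj => ?_, fun i j hij hj => ?_⟩
    · exact h 0 (j + 1) (Nat.succ_pos j) (by simpa using hj) a ha
    · exact h (i + 1) (j + 1) (by omega) (by simpa using hj)
  · rintro ⟨hc, ht⟩ (_ | i) (_ | j) hij hj a ha x hx
    · omega
    · exact forall_getD_mem_iff.2 (hc a ha) j (by simpa using hj) x hx
    · omega
    · exact ht i j (by omega) (by simpa using hj) a ha x hx

inductive IsYFFilling : List (List ℕ) → Prop
  | nil : IsYFFilling []
  | single {a : ℕ} {t : List (List ℕ)} :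
      (∀ x ∈ t.flatten, x < a) → IsYFFilling t → IsYFFilling ([a] :: t)
  | pair {a b : ℕ} {t : List (List ℕ)} :
      a < b → (∀ x ∈ t.flatten, x < b) → IsYFFilling t → IsYFFilling ([b, a] :: t)

lemma isYFFilling_iff {t : List (List ℕ)} :
    IsYFFilling t ↔ (∀ c ∈ t, c.length = 1 ∨ c.length = 2) ∧
      (∀ c ∈ t, List.IsChain (fun a b => b < a) c) ∧ TopDominant t := by
  constructor
  · intro ht
    induction ht with
    | nil => simp [TopDominant]
    | single hlt _ ih =>
      obtain ⟨hlen, hchain, hdom⟩ := ih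
      exact ⟨List.forall_mem_cons.2 ⟨by simp, hlen⟩,
        List.forall_mem_cons.2 ⟨List.isChain_singleton _, hchain⟩,
        topDominant_cons.2 ⟨by simpa using hlt, hdom⟩⟩
    | pair hab hlt _ ih =>
      obtain ⟨hlen, hchain, hdom⟩ := ih
      exact ⟨List.forall_mem_cons.2 ⟨by simp, hlen⟩,
        List.forall_mem_cons.2 ⟨List.isChain_pair.2 hab, hchain⟩,
        topDominant_cons.2 ⟨by simpa using hlt, hdom⟩⟩
  · induction t with
    | nil => exact fun _ => .nil
    | cons c t ih =>
      rintro ⟨hlen, hchain, hdom⟩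
      obtain ⟨hc, hdom⟩ := topDominant_cons.1 hdom
      simp only [List.mem_cons, forall_eq_or_imp] at hlen hchain
      have ht := ih ⟨hlen.2, hchain.2, hdom⟩
      rcases hlen.1 with h1 | h2
      · obtain ⟨a, rfl⟩ := List.length_eq_one_iff.1 h1
        exact .single (by simpa using hc) ht
      · obtain ⟨b, a, rfl⟩ := List.length_eq_two.1 h2
        exact .pair ((List.isChain_pair (R := fun x y => y < x)).1 hchain.1) (by simpa using hc) ht

lemma isYFT_iff {n : ℕ} {t : List (List ℕ)} :
    IsYFT n t ↔ IsYFFilling t ∧ t.flatten.Perm (List.range' 1 n) := by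
  rw [isYFFilling_iff, IsYFT, TopDominant, and_assoc, and_assoc]
  rfl

lemma IsYFFilling.map {f : ℕ → ℕ} (hf : StrictMono f) {t : List (List ℕ)} (ht : IsYFFilling t) :
    IsYFFilling (t.map (List.map f)) := by
  induction ht with
  | nil => exact .nil
  | single hlt _ ih =>
    refine .single ?_ ih
    simpa only [← List.map_flatten, List.forall_mem_map, hf.lt_iff_lt] using hlt
  | pair hab hlt _ ih =>
    refine .pair (hf hab) ?_ ih
    simpa only [← List.map_flatten, List.forall_mem_map, hf.lt_iff_lt] using hlt

@[simp] lemma shapeOf_cons (c : List ℕ) (t : List (List ℕ)) :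
    shapeOf (c :: t) = c.length :: shapeOf t := rfl

lemma shapeOf_map (f : ℕ → ℕ) (t : List (List ℕ)) :
    shapeOf (t.map (List.map f)) = shapeOf t := by
  simp [shapeOf, Function.comp_def]

lemma sum_shapeOf (t : List (List ℕ)) : (shapeOf t).sum = t.flatten.length := by
  rw [shapeOf, List.length_flatten]

lemma IsSnakeshape.length_le_sum {u : List ℕ} (hu : IsSnakeshape u) : u.length ≤ u.sum :=
  List.length_le_sum_of_one_le _ fun p hp => by rcases hu p hp with rfl | rfl <;> simp

lemma IsYFFilling.isSnakeshape_shapeOf {t : List (List ℕ)} (ht : IsYFFilling t) :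
    IsSnakeshape (shapeOf t) := by
  induction ht with
  | nil => exact List.forall_mem_nil _
  | single _ _ ih => exact List.forall_mem_cons.2 ⟨.inl rfl, ih⟩
  | pair _ _ _ ih => exact List.forall_mem_cons.2 ⟨.inr rfl, ih⟩

lemma minWord_cons (c : List ℕ) (t : List (List ℕ)) : minWord (c :: t) = minWord t ++ c := by
  simp [minWord]

lemma mem_minWord {x : ℕ} {t : List (List ℕ)} : x ∈ minWord t ↔ x ∈ t.flatten := by
  simp [minWord]

lemma length_minWord (t : List (List ℕ)) : (minWord t).length = (shapeOf t).sum := by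
  simp [minWord, shapeOf, List.length_flatten, List.sum_reverse]

def tableauRank (t : List (List ℕ)) : ℕ := invCount (minWord t)

lemma tableauRank_map {f : ℕ → ℕ} (hf : StrictMono f) (t : List (List ℕ)) :
    tableauRank (t.map (List.map f)) = tableauRank t := by
  rw [tableauRank, tableauRank, minWord, minWord, ← List.map_reverse, ← List.map_flatten,
    invCount_map_of_strictMono hf]

lemma tableauRank_cons_single {a : ℕ} {t : List (List ℕ)} (h : ∀ x ∈ t.flatten, x < a) :
    tableauRank ([a] :: t) = tableauRank t := by
  have ha : (minWord t).countP (a < ·) = 0 :=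
    List.countP_eq_zero.2 (by simpa [mem_minWord] using fun x hx => (h x hx).le)
  rw [tableauRank, minWord_cons, invCount_append_singleton, ha, add_zero, tableauRank]

lemma tableauRank_cons_pair {a b : ℕ} {t : List (List ℕ)} (hab : a < b)
    (h : ∀ x ∈ t.flatten, x < b) :
    tableauRank ([b, a] :: t) = tableauRank t + (minWord t).countP (a < ·) + 1 := by
  have hb : (minWord t).countP (b < ·) = 0 :=
    List.countP_eq_zero.2 (by simpa [mem_minWord] using fun x hx => (h x hx).le)
  rw [tableauRank, minWord_cons, show minWord t ++ [b, a] = minWord t ++ [b] ++ [a] by simp,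
    invCount_append_singleton, invCount_append_singleton, List.countP_append, hb]
  simp [hab, tableauRank, add_assoc]

lemma cTcols_cons (h : ℕ) (u : List ℕ) :
    cTcols (h :: u) = (if h = 2 then [u.sum + 2, u.sum + 1] else [u.sum + 1]) :: cTcols u := by
  simp only [cTcols, List.length_cons, List.range_succ_eq_map, List.map_cons, List.map_map]
  congr 1
  · simp
  · refine List.map_congr_left fun i _ => ?_
    simp only [Function.comp_apply, Nat.succ_eq_add_one, List.take_succ_cons, List.sum_cons,
      List.getD_cons_succ, Nat.add_sub_add_left]

lemma count_two_le_tableauRank {t : List (List ℕ)} (ht : IsYFFilling t) :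
    (shapeOf t).count 2 ≤ tableauRank t := by
  induction ht with
  | nil => simp [shapeOf]
  | single hlt _ ih =>
    rw [tableauRank_cons_single hlt]
    simpa [List.count_cons] using ih
  | pair hab hlt _ ih =>
    rw [tableauRank_cons_pair hab hlt]
    simp only [shapeOf_cons, List.length_cons, List.length_nil, Nat.reduceAdd,
      List.count_cons_self]
    omega

lemma eq_cTcols_of_tableauRank_eq {t : List (List ℕ)} {n : ℕ} (ht : IsYFFilling t)
    (hperm : t.flatten.Perm (List.range' 1 n)) (hrank : tableauRank t = (shapeOf t).count 2) :
    t = cTcols (shapeOf t) := by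
  induction ht generalizing n with
  | nil => rfl
  | @single a t hlt ht ih =>
    simp only [List.flatten_cons, List.singleton_append] at hperm
    obtain ⟨m, rfl⟩ : ∃ m, n = m + 1 := ⟨t.flatten.length, by simpa using hperm.length_eq.symm⟩
    obtain ⟨rfl, ht_perm⟩ :=
      (cons_perm_range'_iff_of_forall_le fun x hx => (hlt x hx).le).1 hperm
    rw [tableauRank_cons_single hlt] at hrank
    have ht_eq := ih ht_perm (by simpa [List.count_cons] using hrank)
    rw [shapeOf_cons, cTcols_cons, ← ht_eq, sum_shapeOf, ht_perm.length_eq, List.length_range']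
    simp [add_comm]
  | @pair a b t hab hlt ht ih =>
    have hmin := count_two_le_tableauRank ht
    rw [tableauRank_cons_pair hab hlt] at hrank
    simp only [shapeOf_cons, List.length_cons, List.length_nil, Nat.reduceAdd,
      List.count_cons_self] at hrank
    have hle : ∀ x ∈ t.flatten, x ≤ a := by
      have := List.countP_eq_zero.1 (show (minWord t).countP (a < ·) = 0 by omega)
      simpa [mem_minWord] using this
    simp only [List.flatten_cons, List.cons_append, List.nil_append] at hperm
    obtain ⟨m, rfl⟩ : ∃ m, n = m + 2 := ⟨t.flatten.length, by simpa using hperm.length_eq.symm⟩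
    obtain ⟨rfl, hperm'⟩ := (cons_perm_range'_iff_of_forall_le (l := a :: t.flatten)
      (List.forall_mem_cons.2 ⟨hab.le, fun x hx => (hlt x hx).le⟩)).1 hperm
    obtain ⟨rfl, ht_perm⟩ := (cons_perm_range'_iff_of_forall_le hle).1 hperm'
    have ht_eq := ih ht_perm (by omega)
    rw [shapeOf_cons, cTcols_cons, ← ht_eq, sum_shapeOf, ht_perm.length_eq, List.length_range']
    simp [add_comm, add_left_comm]

lemma count_two_lt_tableauRank {n : ℕ} {t : List (List ℕ)} (ht : IsYFT n t)
    (hne : t ≠ cTcols (shapeOf t)) : (shapeOf t).count 2 < tableauRank t :=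
  have ⟨hfill, hperm⟩ := isYFT_iff.1 ht
  (count_two_le_tableauRank hfill).lt_of_ne fun h =>
    hne (eq_cTcols_of_tableauRank_eq hfill hperm h.symm)

lemma sum_map_range_getD (u : List ℕ) :
    ((List.range u.length).map (u.getD · 0)).sum = u.sum := by
  induction u with
  | nil => rfl
  | cons h u ih => simpa [List.range_succ_eq_map, Function.comp_def] using ih

def maxRank (u : List ℕ) : ℕ :=
  ((List.range u.length).map (fun i =>
    (u.take i).count 2 * u.getD i 0 + if u.getD i 0 = 2 then 1 else 0)).sum

lemma maxRank_cons (h : ℕ) (u : List ℕ) :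
    maxRank (h :: u) = maxRank u + if h = 2 then u.sum + 1 else 0 := by
  rw [← sum_map_range_getD u]
  by_cases h2 : h = 2
  · simp [maxRank, h2, List.range_succ_eq_map, Function.comp_def, add_mul, List.sum_map_add]
    ring
  · simp [maxRank, h2, List.range_succ_eq_map, Function.comp_def]

lemma tableauRank_le_maxRank {t : List (List ℕ)} (ht : IsYFFilling t) :
    tableauRank t ≤ maxRank (shapeOf t) := by
  induction ht with
  | nil => simp [tableauRank, minWord, invCount, maxRank, shapeOf]
  | single hlt _ ih => simpa [tableauRank_cons_single hlt, maxRank_cons] using ih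
  | @pair a b t hab hlt _ ih =>
    have hcount : (minWord t).countP (a < ·) ≤ (shapeOf t).sum :=
      List.countP_le_length.trans_eq (length_minWord t)
    rw [tableauRank_cons_pair hab hlt, shapeOf_cons, maxRank_cons]
    simp only [List.length_cons, List.length_nil, Nat.reduceAdd, if_true]
    omega

lemma rTcols_cons_one (m : ℕ) (u : List ℕ) :
    rTcols (m + 1) (1 :: u) = [m + 1] :: rTcols m u := by
  simp only [rTcols, List.length_cons, List.range_succ_eq_map, List.map_cons, List.map_map]
  congr 1
  refine List.map_congr_left fun i _ => ?_
  simp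

lemma rTcols_cons_two {m : ℕ} {u : List ℕ} (hu : u.length ≤ m) :
    rTcols (m + 2) (2 :: u) = [m + 2, 1] :: (rTcols m u).map (List.map (· + 1)) := by
  simp only [rTcols, List.length_cons, List.range_succ_eq_map, List.map_cons, List.map_map]
  congr 1
  refine List.map_congr_left fun i hi => ?_
  have : m + 2 - (i + 1) = m - i + 1 := by simp at hi; omega
  simp only [Function.comp_apply, List.getD_cons_succ, List.take_succ_cons, List.count_cons_self,
    this]
  split_ifs <;> rfl

/- The entries are allowed to be any interval `k + 1, …, k + m`: the columns to the right of a
height-two column of `rT_u` carry the entries `2, …`, not `1, …`. -/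
lemma eq_map_rTcols_of_tableauRank_eq {t : List (List ℕ)} {k m : ℕ} (ht : IsYFFilling t)
    (hperm : t.flatten.Perm (List.range' (k + 1) m))
    (hrank : tableauRank t = maxRank (shapeOf t)) :
    t = (rTcols m (shapeOf t)).map (List.map (· + k)) := by
  induction ht generalizing k m with
  | nil => rfl
  | @single a t hlt ht ih =>
    simp only [List.flatten_cons, List.singleton_append] at hperm
    obtain ⟨m, rfl⟩ : ∃ m', m = m' + 1 := ⟨t.flatten.length, by simpa using hperm.length_eq.symm⟩
    obtain ⟨rfl, ht_perm⟩ :=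
      (cons_perm_range'_iff_of_forall_le fun x hx => (hlt x hx).le).1 hperm
    rw [tableauRank_cons_single hlt, shapeOf_cons, maxRank_cons] at hrank
    have ht_eq := ih ht_perm (by simpa using hrank)
    rw [shapeOf_cons, List.length_singleton, rTcols_cons_one, List.map_cons, ← ht_eq]
    simp [add_comm, add_left_comm]
  | @pair a b t hab hlt ht ih =>
    have hmax := tableauRank_le_maxRank ht
    have hcount : (minWord t).countP (a < ·) ≤ (minWord t).length := List.countP_le_length
    rw [tableauRank_cons_pair hab hlt, shapeOf_cons, maxRank_cons, ← length_minWord] at hrank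
    simp only [List.length_cons, List.length_nil, Nat.reduceAdd, if_true] at hrank
    have hge : ∀ x ∈ t.flatten, a ≤ x := by
      have := List.countP_eq_length.1 (show (minWord t).countP (a < ·) = _ by omega)
      exact fun x hx => (of_decide_eq_true (this x (mem_minWord.2 hx))).le
    simp only [List.flatten_cons, List.cons_append, List.nil_append] at hperm
    obtain ⟨m, rfl⟩ : ∃ m', m = m' + 2 := ⟨t.flatten.length, by simpa using hperm.length_eq.symm⟩
    obtain ⟨rfl, hperm'⟩ := (cons_perm_range'_iff_of_forall_le (l := a :: t.flatten)
      (List.forall_mem_cons.2 ⟨hab.le, fun x hx => (hlt x hx).le⟩)).1 hperm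
    obtain ⟨rfl, ht_perm⟩ := (cons_perm_range'_iff_of_forall_ge hge).1 hperm'
    have ht_eq := ih ht_perm (by omega)
    have hlen : (shapeOf t).length ≤ m :=
      ht.isSnakeshape_shapeOf.length_le_sum.trans_eq
        ((sum_shapeOf t).trans (by simpa using ht_perm.length_eq))
    rw [shapeOf_cons, List.length_cons, List.length_singleton, rTcols_cons_two hlen,
      List.map_cons, List.map_map]
    congr 1
    · simp [add_comm, add_left_comm]
    · exact ht_eq.trans (by simp [Function.comp_def, add_assoc, add_comm 1 k])

lemma tableauRank_lt_maxRank {n : ℕ} {t : List (List ℕ)} (ht : IsYFT n t)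
    (hne : t ≠ rTcols n (shapeOf t)) : tableauRank t < maxRank (shapeOf t) :=
  have ⟨hfill, hperm⟩ := isYFT_iff.1 ht
  (tableauRank_le_maxRank hfill).lt_of_ne fun h =>
    hne (by simpa using eq_map_rTcols_of_tableauRank_eq (k := 0) hfill hperm h)

@[elab_as_elim]
lemma IsSnakeshape.induction {motive : (u : List ℕ) → IsSnakeshape u → Prop}
    (nil : motive [] (List.forall_mem_nil _))
    (one : ∀ u (hu : IsSnakeshape u), motive u hu →
      motive (1 :: u) (List.forall_mem_cons.2 ⟨.inl rfl, hu⟩))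
    (two : ∀ u (hu : IsSnakeshape u), motive u hu →
      motive (2 :: u) (List.forall_mem_cons.2 ⟨.inr rfl, hu⟩)) :
    ∀ {u : List ℕ} (hu : IsSnakeshape u), motive u hu
  | [], _ => nil
  | _ :: u, hu => by
    obtain ⟨hh, hu'⟩ := List.forall_mem_cons.1 hu
    rcases hh with rfl | rfl
    · exact one u hu' (IsSnakeshape.induction nil one two hu')
    · exact two u hu' (IsSnakeshape.induction nil one two hu')

lemma shapeOf_cTcols {u : List ℕ} (hu : IsSnakeshape u) : shapeOf (cTcols u) = u := by
  induction hu using IsSnakeshape.induction with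
  | nil => rfl
  | one u _ ih => simp [cTcols_cons, ih]
  | two u _ ih => simp [cTcols_cons, ih]

lemma flatten_cTcols_perm {u : List ℕ} (hu : IsSnakeshape u) :
    (cTcols u).flatten.Perm (List.range' 1 u.sum) := by
  induction hu using IsSnakeshape.induction with
  | nil => rfl
  | one u _ ih =>
    have hle : ∀ x ∈ (cTcols u).flatten, x ≤ u.sum + 1 := fun x hx =>
      (lt_succ_of_mem_of_perm_range' ih hx).le
    rw [cTcols_cons, if_neg (by decide), List.flatten_cons, List.singleton_append, List.sum_cons,
      add_comm 1]
    exact (cons_perm_range'_iff_of_forall_le hle).2 ⟨by omega, ih⟩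
  | two u _ ih =>
    have hle : ∀ x ∈ (cTcols u).flatten, x ≤ u.sum + 1 := fun x hx =>
      (lt_succ_of_mem_of_perm_range' ih hx).le
    rw [cTcols_cons, if_pos rfl, List.flatten_cons, List.cons_append, List.singleton_append,
      List.sum_cons, add_comm 2]
    refine (cons_perm_range'_iff_of_forall_le (List.forall_mem_cons.2
      ⟨Nat.le_succ _, fun x hx => (hle x hx).trans (Nat.le_succ _)⟩)).2 ⟨by omega, ?_⟩
    exact (cons_perm_range'_iff_of_forall_le hle).2 ⟨by omega, ih⟩

lemma isYFFilling_cTcols {u : List ℕ} (hu : IsSnakeshape u) : IsYFFilling (cTcols u) := by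
  induction hu using IsSnakeshape.induction with
  | nil => exact .nil
  | one u hu ih =>
    rw [cTcols_cons, if_neg (by decide)]
    exact .single (fun x hx => lt_succ_of_mem_of_perm_range' (flatten_cTcols_perm hu) hx) ih
  | two u hu ih =>
    rw [cTcols_cons, if_pos rfl]
    exact .pair (Nat.lt_succ_self _)
      (fun x hx => (lt_succ_of_mem_of_perm_range' (flatten_cTcols_perm hu) hx).trans
        (Nat.lt_succ_self _)) ih

lemma isYFT_cTcols {u : List ℕ} (hu : IsSnakeshape u) : IsYFT u.sum (cTcols u) :=
  isYFT_iff.2 ⟨isYFFilling_cTcols hu, flatten_cTcols_perm hu⟩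

lemma tableauRank_cTcols {u : List ℕ} (hu : IsSnakeshape u) :
    tableauRank (cTcols u) = u.count 2 := by
  induction hu using IsSnakeshape.induction with
  | nil => rfl
  | one u hu ih =>
    rw [cTcols_cons, if_neg (by decide), tableauRank_cons_single
      (fun x hx => lt_succ_of_mem_of_perm_range' (flatten_cTcols_perm hu) hx), ih]
    simp
  | two u hu ih =>
    have hlt : ∀ x ∈ (cTcols u).flatten, x < u.sum + 1 := fun x hx =>
      lt_succ_of_mem_of_perm_range' (flatten_cTcols_perm hu) hx
    rw [cTcols_cons, if_pos rfl, tableauRank_cons_pair (Nat.lt_succ_self _)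
      (fun x hx => (hlt x hx).trans (Nat.lt_succ_self _)), ih, List.countP_eq_zero.2]
    · simp
    · simpa [mem_minWord] using fun x hx => (hlt x hx).le

lemma shapeOf_rTcols (n : ℕ) {u : List ℕ} (hu : IsSnakeshape u) : shapeOf (rTcols n u) = u := by
  refine List.ext_getElem (by simp [shapeOf, rTcols]) fun i h₁ h₂ => ?_
  simp only [shapeOf, rTcols, List.getElem_map, List.getElem_range, List.getD_eq_getElem _ _ h₂]
  rcases hu _ (List.getElem_mem h₂) with hi | hi <;> simp [hi]

lemma flatten_rTcols_perm {u : List ℕ} (hu : IsSnakeshape u) :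
    (rTcols u.sum u).flatten.Perm (List.range' 1 u.sum) := by
  induction hu using IsSnakeshape.induction with
  | nil => rfl
  | one u _ ih =>
    have hle : ∀ x ∈ (rTcols u.sum u).flatten, x ≤ u.sum + 1 := fun x hx =>
      (lt_succ_of_mem_of_perm_range' ih hx).le
    rw [List.sum_cons, add_comm, rTcols_cons_one, List.flatten_cons, List.singleton_append]
    exact (cons_perm_range'_iff_of_forall_le hle).2 ⟨by omega, ih⟩
  | two u hu ih =>
    have hshift : ((rTcols u.sum u).map (List.map (· + 1))).flatten.Perm
        (List.range' 2 u.sum) := by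
      rw [← List.map_flatten]
      exact ih.map_add_range' 1
    have hge : ∀ x ∈ ((rTcols u.sum u).map (List.map (· + 1))).flatten, 1 ≤ x := fun x hx => by
      have := List.mem_range'_1.1 (hshift.subset hx)
      omega
    have hle : ∀ x ∈ 1 :: ((rTcols u.sum u).map (List.map (· + 1))).flatten, x ≤ u.sum + 2 :=
      List.forall_mem_cons.2 ⟨by omega, fun x hx => by
        have := List.mem_range'_1.1 (hshift.subset hx)
        omega⟩
    rw [List.sum_cons, add_comm, rTcols_cons_two hu.length_le_sum, List.flatten_cons,
      List.cons_append, List.singleton_append]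
    refine (cons_perm_range'_iff_of_forall_le hle).2 ⟨by omega, ?_⟩
    exact (cons_perm_range'_iff_of_forall_ge hge).2 ⟨rfl, hshift⟩

lemma flatten_map_rTcols_perm {u : List ℕ} (hu : IsSnakeshape u) :
    ((rTcols u.sum u).map (List.map (· + 1))).flatten.Perm (List.range' 2 u.sum) := by
  rw [← List.map_flatten]
  exact (flatten_rTcols_perm hu).map_add_range' 1

lemma isYFFilling_rTcols {u : List ℕ} (hu : IsSnakeshape u) : IsYFFilling (rTcols u.sum u) := by
  induction hu using IsSnakeshape.induction with
  | nil => exact .nil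
  | one u hu ih =>
    rw [List.sum_cons, add_comm, rTcols_cons_one]
    exact .single (fun x hx => lt_succ_of_mem_of_perm_range' (flatten_rTcols_perm hu) hx) ih
  | two u hu ih =>
    rw [List.sum_cons, add_comm, rTcols_cons_two hu.length_le_sum]
    refine .pair (by omega) (fun x hx => ?_) (ih.map add_left_strictMono)
    have := List.mem_range'_1.1 ((flatten_map_rTcols_perm hu).subset hx)
    omega

lemma isYFT_rTcols {u : List ℕ} (hu : IsSnakeshape u) : IsYFT u.sum (rTcols u.sum u) :=
  isYFT_iff.2 ⟨isYFFilling_rTcols hu, flatten_rTcols_perm hu⟩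

lemma tableauRank_rTcols {u : List ℕ} (hu : IsSnakeshape u) :
    tableauRank (rTcols u.sum u) = maxRank u := by
  induction hu using IsSnakeshape.induction with
  | nil => rfl
  | one u hu ih =>
    rw [List.sum_cons, add_comm, rTcols_cons_one, maxRank_cons, tableauRank_cons_single
      (fun x hx => lt_succ_of_mem_of_perm_range' (flatten_rTcols_perm hu) hx), ih]
    rfl
  | two u hu ih =>
    have hge : ∀ x ∈ minWord ((rTcols u.sum u).map (List.map (· + 1))), 1 < x := fun x hx =>
      (List.mem_range'_1.1 ((flatten_map_rTcols_perm hu).subset (mem_minWord.1 hx))).1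
    rw [List.sum_cons, add_comm, rTcols_cons_two hu.length_le_sum, maxRank_cons, if_pos rfl,
      tableauRank_cons_pair (by omega) (fun x hx => ?_), tableauRank_map add_left_strictMono,
      ih, List.countP_eq_length.2 (by simpa using hge), length_minWord, shapeOf_map,
      shapeOf_rTcols _ hu]
    · ring
    · have := List.mem_range'_1.1 ((flatten_map_rTcols_perm hu).subset hx)
      omega

/-- among standard Young–Fibonacci tableaux of shape `u`, the column
canonical tableau is the unique one of minimal rank `ρ(t) = inv(min(t))` and the
row canonical tableau is the unique one of maximal rank; moreover `ρ(cT_u)` is the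
number of parts of `u` equal to `2` and `ρ(rT_u)` is the stated sum over cells. -/
theorem canonical_tableaux_extremal_ranks (n : ℕ) (u : List ℕ)
    (hu : IsSnakeshape u) (hsum : u.sum = n) :
    IsYFT n (cTcols u) ∧ shapeOf (cTcols u) = u ∧
    IsYFT n (rTcols n u) ∧ shapeOf (rTcols n u) = u ∧
    (∀ t : List (List ℕ), IsYFT n t → shapeOf t = u → t ≠ cTcols u →
      invCount (minWord (cTcols u)) < invCount (minWord t)) ∧
    (∀ t : List (List ℕ), IsYFT n t → shapeOf t = u → t ≠ rTcols n u →
      invCount (minWord t) < invCount (minWord (rTcols n u))) ∧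
    invCount (minWord (cTcols u)) = u.count 2 ∧
    invCount (minWord (rTcols n u)) =
      ((List.range u.length).map (fun i =>
        (u.take i).count 2 * u.getD i 0 +
          if u.getD i 0 = 2 then 1 else 0)).sum := by
  subst hsum
  refine ⟨isYFT_cTcols hu, shapeOf_cTcols hu, isYFT_rTcols hu, shapeOf_rTcols _ hu, ?_, ?_,
    tableauRank_cTcols hu, tableauRank_rTcols hu⟩
  · rintro t ht rfl hne
    exact (tableauRank_cTcols hu).trans_lt (count_two_lt_tableauRank ht hne)
  · rintro t ht rfl hne
    exact (tableauRank_lt_maxRank ht hne).trans_eq (tableauRank_rTcols hu).symm
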